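/- arXiv:math/0305007 — 2 statements merged into one kernel-verified Lean document; each statement's English description precedes it below -/
import Mathlib

section
/- Let φ ∈ L²(ℝ^d) and ε > 0, and define the unfolding T_ε(φ)(x,y) = φ(ε[x/ε]_Y + εy) for x ∈ ℝ^d, y ∈ Y = [0,1)^d. Then ∫_{ℝ^d} ∫_Y |T_ε(φ)(x,y)|² dy dx = ∫_{ℝ^d} |φ(z)|² dz, i.e. the unfolding operator is an isometry from L²(ℝ^d) into L²(ℝ^d × Y). -/
/-!
For fixed `x`, the affine map `y ↦ ε⌊x/ε⌋ + εy` carries the unit cube `Y` onto the lattice cell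
of `x`, so the inner integral is `ε^(-d)` times the integral of `f = φ²` over that cell.
Integrating in `x` and swapping the integrals, each `z` is weighted by the volume of the set of
`x` whose cell contains `z`; since lying in the same cell is a symmetric relation, this is the
cell of `z`, of volume `ε^d`.
-/

open MeasureTheory Module

section AffineChangeOfVariables

variable {E : Type*} [NormedAddCommGroup E] [NormedSpace ℝ E] [MeasurableSpace E] [BorelSpace E]
  [FiniteDimensional ℝ E] (μ : Measure E) [μ.IsAddHaarMeasure]

theorem MeasureTheory.Measure.map_add_smul_addHaar (a : E) {r : ℝ} (hr : r ≠ 0) :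
    μ.map (fun y => a + r • y) = ENNReal.ofReal |(r ^ finrank ℝ E)⁻¹| • μ := by
  have hcomp : (fun y => a + r • y) = (a + ·) ∘ (r • ·) := rfl
  rw [hcomp, ← Measure.map_map (measurable_const_add a) (measurable_const_smul r),
    Measure.map_addHaar_smul μ hr, Measure.map_smul, map_add_left_eq_self]

theorem setLIntegral_preimage_add_smul (a : E) {r : ℝ} (hr : r ≠ 0) (f : E → ENNReal)
    (t : Set E) :
    ∫⁻ y in (fun y => a + r • y) ⁻¹' t, f (a + r • y) ∂μ
      = ENNReal.ofReal |(r ^ finrank ℝ E)⁻¹| * ∫⁻ z in t, f z ∂μ := by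
  have hA : MeasurableEmbedding fun y : E => a + r • y :=
    ((Homeomorph.smulOfNeZero r hr).trans (Homeomorph.addLeft a)).measurableEmbedding
  rw [← hA.lintegral_map, ← hA.restrict_map, Measure.map_add_smul_addHaar μ a hr,
    Measure.restrict_smul, lintegral_smul_measure, smul_eq_mul]

end AffineChangeOfVariables

theorem lintegral_setLIntegral_eq_lintegral_measure_mul {α β : Type*} [MeasurableSpace α]
    [MeasurableSpace β] {μ : Measure α} {ν : Measure β} [SFinite μ] [SFinite ν] {C : α → Set β}
    (hC : MeasurableSet {p : α × β | p.2 ∈ C p.1}) {f : β → ENNReal} (hf : Measurable f) :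
    ∫⁻ x, ∫⁻ z in C x, f z ∂ν ∂μ = ∫⁻ z, μ {x | z ∈ C x} * f z ∂ν := by
  set S := {p : α × β | p.2 ∈ C p.1}
  have hSf : Measurable (S.indicator fun p => f p.2) := (hf.comp measurable_snd).indicator hC
  calc ∫⁻ x, ∫⁻ z in C x, f z ∂ν ∂μ = ∫⁻ x, ∫⁻ z, S.indicator (fun p => f p.2) (x, z) ∂ν ∂μ := by
        refine lintegral_congr fun x => ?_
        rw [← lintegral_indicator (s := C x) (measurable_prodMk_left hC)]
        rfl
    _ = ∫⁻ z, ∫⁻ x, S.indicator (fun p => f p.2) (x, z) ∂μ ∂ν :=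
        lintegral_lintegral_swap hSf.aemeasurable
    _ = ∫⁻ z, μ {x | z ∈ C x} * f z ∂ν := by
        refine lintegral_congr fun z => ?_
        change ∫⁻ x, {x | z ∈ C x}.indicator (fun _ => f z) x ∂μ = _
        rw [lintegral_indicator_const (s := {x | z ∈ C x}) (measurable_prodMk_right hC), mul_comm]

section LatticeCells

variable {ι : Type*}

noncomputable def latticeCell (ε : ℝ) (x : ι → ℝ) : Set (ι → ℝ) :=
  {z | ∀ i, ⌊z i / ε⌋ = ⌊x i / ε⌋}

noncomputable def cellCorner (ε : ℝ) (x : ι → ℝ) : ι → ℝ := fun i => ε * ⌊x i / ε⌋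

theorem mem_latticeCell_comm {ε : ℝ} {x z : ι → ℝ} :
    z ∈ latticeCell ε x ↔ x ∈ latticeCell ε z := by
  simp only [latticeCell, Set.mem_ofPred_eq, eq_comm]

theorem measurableSet_mem_latticeCell [Countable ι] (ε : ℝ) :
    MeasurableSet {p : (ι → ℝ) × (ι → ℝ) | p.2 ∈ latticeCell ε p.1} := by
  have hfloor (i : ι) : Measurable fun z : ι → ℝ => ⌊z i / ε⌋ :=
    Int.measurable_floor.comp (by fun_prop)
  change MeasurableSet {p : (ι → ℝ) × (ι → ℝ) | ∀ i, ⌊p.2 i / ε⌋ = ⌊p.1 i / ε⌋}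
  rw [Set.ofPred_forall]
  exact MeasurableSet.iInter fun i =>
    measurableSet_eq_fun ((hfloor i).comp measurable_snd) ((hfloor i).comp measurable_fst)

theorem preimage_latticeCell {ε : ℝ} (hε : ε ≠ 0) (x : ι → ℝ) :
    (fun y => cellCorner ε x + ε • y) ⁻¹' latticeCell ε x
      = Set.pi Set.univ fun _ => Set.Ico 0 1 := by
  ext y
  simp only [latticeCell, cellCorner, Set.mem_preimage, Set.mem_ofPred_eq, Set.mem_univ_pi,
    Pi.add_apply, Pi.smul_apply, smul_eq_mul]
  refine forall_congr' fun i => ?_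
  rw [← mul_add, mul_div_cancel_left₀ _ hε, Int.floor_intCast_add, add_eq_left,
    Int.floor_eq_zero_iff]

end LatticeCells

section Unfolding

variable {ι : Type*} [Fintype ι] {ε : ℝ}

theorem ofReal_inv_pow_mul_volume_latticeCell (hε : ε ≠ 0) (x : ι → ℝ) :
    ENNReal.ofReal |(ε ^ Fintype.card ι)⁻¹| * volume (latticeCell ε x) = 1 := by
  have h := setLIntegral_preimage_add_smul volume (cellCorner ε x) hε (fun _ => 1)
    (latticeCell ε x)
  rw [preimage_latticeCell hε, setLIntegral_one, setLIntegral_one,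
    finrank_fintype_fun_eq_card] at h
  simpa [Real.volume_pi_Ico] using h.symm

theorem lintegral_setLIntegral_unitCube_cellCorner (hε : ε ≠ 0) {f : (ι → ℝ) → ENNReal}
    (hf : Measurable f) :
    ∫⁻ x, ∫⁻ y in Set.pi Set.univ (fun _ => Set.Ico 0 1), f (cellCorner ε x + ε • y)
      = ∫⁻ z, f z := by
  calc ∫⁻ x, ∫⁻ y in Set.pi Set.univ (fun _ => Set.Ico 0 1), f (cellCorner ε x + ε • y)
      = ∫⁻ x, ENNReal.ofReal |(ε ^ Fintype.card ι)⁻¹| * ∫⁻ z in latticeCell ε x, f z :=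
        lintegral_congr fun x => by
          rw [← preimage_latticeCell hε x, setLIntegral_preimage_add_smul volume _ hε,
            finrank_fintype_fun_eq_card]
    _ = ENNReal.ofReal |(ε ^ Fintype.card ι)⁻¹| * ∫⁻ z, volume (latticeCell ε z) * f z := by
        rw [lintegral_const_mul' _ _ ENNReal.ofReal_ne_top,
          lintegral_setLIntegral_eq_lintegral_measure_mul (measurableSet_mem_latticeCell ε) hf]
        simp only [mem_latticeCell_comm, Set.ofPred_mem_eq]
    _ = ∫⁻ z, f z := by
        rw [← lintegral_const_mul' _ _ ENNReal.ofReal_ne_top]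
        simp only [← mul_assoc, ofReal_inv_pow_mul_volume_latticeCell hε, one_mul]

end Unfolding

/-- The unfolding operator `T_ε(φ)(x,y) = φ(ε[x/ε]_Y + εy)` is an isometry from `L²(ℝ^d)`
into `L²(ℝ^d × Y)`: `∫_{ℝ^d} ∫_Y |T_ε(φ)(x,y)|² dy dx = ∫_{ℝ^d} |φ(z)|² dz`. -/
theorem stmt_12 (d : ℕ) (φ : (Fin d → ℝ) → ℝ) (hφ : Measurable φ)
    (ε : ℝ) (hε : 0 < ε) :
    ∫⁻ x : Fin d → ℝ, ∫⁻ y in Set.pi Set.univ (fun _ : Fin d => Set.Ico (0 : ℝ) 1),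
        ENNReal.ofReal ((φ (fun i => ε * (⌊x i / ε⌋ : ℝ) + ε * y i)) ^ 2) ∂volume ∂volume
      = ∫⁻ z : Fin d → ℝ, ENNReal.ofReal ((φ z) ^ 2) ∂volume :=
  lintegral_setLIntegral_unitCube_cellCorner hε.ne' (hφ.pow_const 2).ennreal_ofReal
end

section
/- Let H₁, H₂ be Hilbert spaces and L₁ : H₁ → H₁*, L₂ : H₂ → H₂* bounded operators induced by bounded coercive symmetric bilinear forms a₁, a₂ with coercivity constants c₁, c₂ > 0. Then the tensor product bilinear form a on H₁ ⊗ H₂ (the Hilbert tensor product) determined by a(u₁⊗u₂, v₁⊗v₂) = a₁(u₁,v₁) a₂(u₂,v₂) is bounded and coercive with coercivity constant c₁c₂; in particular, for every F ∈ (H₁ ⊗ H₂)* there is a unique C ∈ H₁ ⊗ H₂ with a(C, V) = F(V) for all V ∈ H₁ ⊗ H₂. -/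
/-!
On a finite sum `w = ∑ᵢ m xᵢ yᵢ` of elementary tensors,
`a w w - c₁ c₂ ‖w‖² = ∑ᵢⱼ (a₁ - c₁ ⟪·,·⟫)(xᵢ, xⱼ) a₂(yᵢ, yⱼ) + c₁ ∑ᵢⱼ ⟪xᵢ, xⱼ⟫ (a₂ - c₂ ⟪·,·⟫)(yᵢ, yⱼ)`.
Each double sum is the sum of the entries of a Hadamard product of two positive semidefinite
Gram matrices, hence nonnegative by the Schur product theorem. Coercivity then extends from the
dense span of elementary tensors to all of `T` by continuity, and Lax–Milgram gives the unique
solution.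
-/

open scoped RealInnerProductSpace

theorem Matrix.PosSemidef.sum_sum_nonneg {n R : Type*} [Fintype n] [Ring R] [PartialOrder R]
    [StarRing R] {A : Matrix n n R} (hA : A.PosSemidef) : 0 ≤ ∑ i, ∑ j, A i j := by
  simpa [dotProduct, Matrix.mulVec] using hA.dotProduct_mulVec_nonneg 1

namespace LinearMap

section Gram

variable {R M ι : Type*} [CommSemiring R] [AddCommMonoid M] [Module R M]

def gram (B : M →ₗ[R] M →ₗ[R] R) (v : ι → M) : Matrix ι ι R :=
  Matrix.of fun i j => B (v i) (v j)

@[simp]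
theorem gram_apply (B : M →ₗ[R] M →ₗ[R] R) (v : ι → M) (i j : ι) :
    B.gram v i j = B (v i) (v j) := rfl

open scoped Matrix in
theorem star_dotProduct_gram_mulVec [Fintype ι] [StarRing R] [TrivialStar R]
    (B : M →ₗ[R] M →ₗ[R] R) (v : ι → M) (x : ι → R) :
    star x ⬝ᵥ B.gram v *ᵥ x = B (∑ i, x i • v i) (∑ j, x j • v j) := by
  simp only [star_trivial, dotProduct, Matrix.mulVec, gram_apply, map_sum, map_smul,
    coe_sum, Finset.sum_apply, smul_apply, smul_eq_mul, Finset.mul_sum]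
  rw [Finset.sum_comm]
  exact Finset.sum_congr rfl fun j _ => Finset.sum_congr rfl fun i _ => by ring

end Gram

section PosSemidef

variable {M M' ι : Type*} [AddCommGroup M] [Module ℝ M] [AddCommGroup M'] [Module ℝ M']

theorem IsPosSemidef.posSemidef_gram [Fintype ι] {B : M →ₗ[ℝ] M →ₗ[ℝ] ℝ}
    (hB : B.IsPosSemidef) (v : ι → M) : (B.gram v).PosSemidef := by
  refine .of_dotProduct_mulVec_nonneg ?_ fun x => ?_
  · ext i j
    simpa using hB.isSymm.eq (v j) (v i)
  · rw [star_dotProduct_gram_mulVec]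
    exact hB.isNonneg.nonneg _

theorem IsPosSemidef.sum_sum_mul_nonneg [Fintype ι] {B : M →ₗ[ℝ] M →ₗ[ℝ] ℝ}
    {B' : M' →ₗ[ℝ] M' →ₗ[ℝ] ℝ} (hB : B.IsPosSemidef) (hB' : B'.IsPosSemidef)
    (x : ι → M) (y : ι → M') : 0 ≤ ∑ i, ∑ j, B (x i) (x j) * B' (y i) (y j) := by
  simpa using ((hB.posSemidef_gram x).hadamard (hB'.posSemidef_gram y)).sum_sum_nonneg

end PosSemidef

theorem apply_sum_sum_of_apply_eq_mul {R M N P ι : Type*} [CommSemiring R] [AddCommMonoid P]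
    [Module R P] [Fintype ι] {B : P →ₗ[R] P →ₗ[R] R} {m : M → N → P}
    {B₁ : M → M → R} {B₂ : N → N → R}
    (hB : ∀ u₁ u₂ v₁ v₂, B (m u₁ u₂) (m v₁ v₂) = B₁ u₁ v₁ * B₂ u₂ v₂) (x : ι → M) (y : ι → N) :
    B (∑ i, m (x i) (y i)) (∑ j, m (x j) (y j)) = ∑ i, ∑ j, B₁ (x i) (x j) * B₂ (y i) (y j) := by
  simp only [map_sum, coe_sum, Finset.sum_apply, hB]
  exact Finset.sum_comm

theorem exists_eq_sum_of_mem_span_range {R M N P : Type*} [CommSemiring R] [AddCommMonoid M]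
    [Module R M] [AddCommMonoid N] [Module R N] [AddCommMonoid P] [Module R P]
    (m : M →ₗ[R] N →ₗ[R] P) {w : P}
    (hw : w ∈ Submodule.span R (Set.range fun p : M × N => m p.1 p.2)) :
    ∃ (n : ℕ) (x : Fin n → M) (y : Fin n → N), w = ∑ i, m (x i) (y i) := by
  obtain ⟨n, c, g, rfl⟩ := Submodule.mem_span_set'.mp hw
  choose p hp using fun i => (g i).2
  refine ⟨n, fun i => c i • (p i).1, fun i => (p i).2, ?_⟩
  simp only [map_smul, smul_apply, hp]

end LinearMap

section Coercive

variable {E : Type*} [NormedAddCommGroup E] [InnerProductSpace ℝ E] {B : E →ₗ[ℝ] E →ₗ[ℝ] ℝ}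
  {c : ℝ}

theorem isPosSemidef_sub_smul_innerₗ (hsym : ∀ u v, B u v = B v u)
    (hcoer : ∀ u, c * ‖u‖ ^ 2 ≤ B u u) : (B - c • innerₗ E).IsPosSemidef where
  eq u v := by simp [hsym u v, real_inner_comm]
  nonneg u := by simpa [real_inner_self_eq_norm_sq] using hcoer u

theorem isPosSemidef_of_coercive (hc : 0 ≤ c) (hsym : ∀ u v, B u v = B v u)
    (hcoer : ∀ u, c * ‖u‖ ^ 2 ≤ B u u) : B.IsPosSemidef where
  eq := hsym
  nonneg u := (mul_nonneg hc (sq_nonneg ‖u‖)).trans (hcoer u)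

end Coercive

theorem IsCoercive.existsUnique_apply_eq {V : Type*} [NormedAddCommGroup V]
    [InnerProductSpace ℝ V] [CompleteSpace V] {B : V →L[ℝ] V →L[ℝ] ℝ} (hB : IsCoercive B)
    (F : V →L[ℝ] ℝ) : ∃! C : V, ∀ w, B C w = F w := by
  set e := hB.continuousLinearEquivOfBilin
  have hsol : ∀ C, (∀ w, B C w = F w) ↔ e C = (InnerProductSpace.toDual ℝ V).symm F := by
    intro C
    simp only [← hB.continuousLinearEquivOfBilin_apply, ← InnerProductSpace.toDual_symm_apply]
    exact ⟨ext_inner_right ℝ, fun h _ => by rw [h]⟩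
  simpa only [hsol] using e.bijective.existsUnique _

theorem mul_mul_norm_sq_le_apply_sum {H₁ H₂ T ι : Type*} [NormedAddCommGroup H₁]
    [InnerProductSpace ℝ H₁] [NormedAddCommGroup H₂] [InnerProductSpace ℝ H₂]
    [NormedAddCommGroup T] [InnerProductSpace ℝ T] [Fintype ι] {m : H₁ → H₂ → T}
    (hinner : ∀ u₁ u₂ v₁ v₂, ⟪m u₁ u₂, m v₁ v₂⟫ = ⟪u₁, v₁⟫ * ⟪u₂, v₂⟫)
    {a₁ : H₁ →ₗ[ℝ] H₁ →ₗ[ℝ] ℝ} {a₂ : H₂ →ₗ[ℝ] H₂ →ₗ[ℝ] ℝ} {c₁ c₂ : ℝ} (hc₁ : 0 ≤ c₁)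
    (hc₂ : 0 ≤ c₂) (hsym₁ : ∀ u v, a₁ u v = a₁ v u) (hsym₂ : ∀ u v, a₂ u v = a₂ v u)
    (hcoer₁ : ∀ u, c₁ * ‖u‖ ^ 2 ≤ a₁ u u) (hcoer₂ : ∀ u, c₂ * ‖u‖ ^ 2 ≤ a₂ u u)
    {a : T →ₗ[ℝ] T →ₗ[ℝ] ℝ} (ha : ∀ u₁ u₂ v₁ v₂, a (m u₁ u₂) (m v₁ v₂) = a₁ u₁ v₁ * a₂ u₂ v₂)
    (x : ι → H₁) (y : ι → H₂) :
    c₁ * c₂ * ‖∑ i, m (x i) (y i)‖ ^ 2 ≤ a (∑ i, m (x i) (y i)) (∑ i, m (x i) (y i)) := by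
  have h₁ := (isPosSemidef_sub_smul_innerₗ hsym₁ hcoer₁).sum_sum_mul_nonneg
    (isPosSemidef_of_coercive hc₂ hsym₂ hcoer₂) x y
  have h₂ := isPosSemidef_inner.sum_sum_mul_nonneg (isPosSemidef_sub_smul_innerₗ hsym₂ hcoer₂) x y
  rw [← real_inner_self_eq_norm_sq, ← innerₗ_apply_apply,
    LinearMap.apply_sum_sum_of_apply_eq_mul hinner, LinearMap.apply_sum_sum_of_apply_eq_mul ha]
  have hsplit : ∑ i, ∑ j, a₁ (x i) (x j) * a₂ (y i) (y j)
      - c₁ * c₂ * ∑ i, ∑ j, ⟪x i, x j⟫ * ⟪y i, y j⟫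
      = ∑ i, ∑ j, (a₁ - c₁ • innerₗ H₁) (x i) (x j) * a₂ (y i) (y j)
        + c₁ * ∑ i, ∑ j, innerₗ H₁ (x i) (x j) * (a₂ - c₂ • innerₗ H₂) (y i) (y j) := by
    simp only [Finset.mul_sum, ← Finset.sum_add_distrib, ← Finset.sum_sub_distrib]
    refine Finset.sum_congr rfl fun i _ => Finset.sum_congr rfl fun j _ => ?_
    simp only [LinearMap.sub_apply, LinearMap.smul_apply, innerₗ_apply_apply, smul_eq_mul]
    ring
  linarith [mul_nonneg hc₁ h₂]

theorem stmt_16_general (H₁ H₂ T : Type*)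
    [NormedAddCommGroup H₁] [InnerProductSpace ℝ H₁]
    [NormedAddCommGroup H₂] [InnerProductSpace ℝ H₂]
    [NormedAddCommGroup T] [InnerProductSpace ℝ T] [CompleteSpace T]
    (m : H₁ →L[ℝ] H₂ →L[ℝ] T)
    (hdense : Dense (Submodule.span ℝ (Set.range fun p : H₁ × H₂ => m p.1 p.2) : Set T))
    (hinner : ∀ u₁ u₂ v₁ v₂, ⟪m u₁ u₂, m v₁ v₂⟫ = ⟪u₁, v₁⟫ * ⟪u₂, v₂⟫)
    (a₁ : H₁ →L[ℝ] H₁ →L[ℝ] ℝ) (a₂ : H₂ →L[ℝ] H₂ →L[ℝ] ℝ)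
    (c₁ c₂ : ℝ) (hc₁ : 0 < c₁) (hc₂ : 0 < c₂)
    (hsym₁ : ∀ u v, a₁ u v = a₁ v u) (hsym₂ : ∀ u v, a₂ u v = a₂ v u)
    (hcoer₁ : ∀ u, c₁ * ‖u‖ ^ 2 ≤ a₁ u u) (hcoer₂ : ∀ u, c₂ * ‖u‖ ^ 2 ≤ a₂ u u)
    (a : T →L[ℝ] T →L[ℝ] ℝ)
    (ha : ∀ u₁ u₂ v₁ v₂, a (m u₁ u₂) (m v₁ v₂) = a₁ u₁ v₁ * a₂ u₂ v₂) :
    (∀ w : T, c₁ * c₂ * ‖w‖ ^ 2 ≤ a w w) ∧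
    (∀ F : T →L[ℝ] ℝ, ∃! C : T, ∀ V : T, a C V = F V) := by
  have hcoer : ∀ w : T, c₁ * c₂ * ‖w‖ ^ 2 ≤ a w w := by
    refine hdense.induction (fun w hw => ?_) (isClosed_le (by fun_prop) (by fun_prop))
    obtain ⟨n, x, y, rfl⟩ := m.toLinearMap₁₂.exists_eq_sum_of_mem_span_range hw
    exact mul_mul_norm_sq_le_apply_sum (a₁ := a₁.toBilinForm) (a₂ := a₂.toBilinForm)
      (a := a.toBilinForm) hinner hc₁.le hc₂.le hsym₁ hsym₂ hcoer₁ hcoer₂ ha x y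
  have hcoercive : IsCoercive a :=
    ⟨c₁ * c₂, mul_pos hc₁ hc₂, fun w => by simpa only [mul_assoc, sq] using hcoer w⟩
  exact ⟨hcoer, hcoercive.existsUnique_apply_eq⟩

/-- Tensor products of coercive forms: let `T` be the Hilbert tensor product `H₁ ⊗ H₂`,
specified by a bounded bilinear map `m : H₁ × H₂ → T` with dense span of elementary tensors
and `⟪u₁⊗u₂, v₁⊗v₂⟫ = ⟪u₁,v₁⟫⟪u₂,v₂⟫`. If `a₁, a₂` are bounded symmetric coercive bilinear
forms with coercivity constants `c₁, c₂ > 0` and `a` is the bounded bilinear form on `T`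
determined by `a(u₁⊗u₂, v₁⊗v₂) = a₁(u₁,v₁) a₂(u₂,v₂)`, then `a` is coercive with constant
`c₁ c₂`, and for every `F ∈ T*` there is a unique `C ∈ T` with `a(C,V) = F(V)` for all `V`. -/
theorem stmt_16 (H₁ H₂ T : Type*)
    [NormedAddCommGroup H₁] [InnerProductSpace ℝ H₁] [CompleteSpace H₁]
    [NormedAddCommGroup H₂] [InnerProductSpace ℝ H₂] [CompleteSpace H₂]
    [NormedAddCommGroup T] [InnerProductSpace ℝ T] [CompleteSpace T]
    (m : H₁ →L[ℝ] H₂ →L[ℝ] T)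
    (hdense : Dense (Submodule.span ℝ (Set.range fun p : H₁ × H₂ => m p.1 p.2) : Set T))
    (hinner : ∀ u₁ u₂ v₁ v₂, ⟪m u₁ u₂, m v₁ v₂⟫ = ⟪u₁, v₁⟫ * ⟪u₂, v₂⟫)
    (a₁ : H₁ →L[ℝ] H₁ →L[ℝ] ℝ) (a₂ : H₂ →L[ℝ] H₂ →L[ℝ] ℝ)
    (c₁ c₂ : ℝ) (hc₁ : 0 < c₁) (hc₂ : 0 < c₂)
    (hsym₁ : ∀ u v, a₁ u v = a₁ v u) (hsym₂ : ∀ u v, a₂ u v = a₂ v u)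
    (hcoer₁ : ∀ u, c₁ * ‖u‖ ^ 2 ≤ a₁ u u) (hcoer₂ : ∀ u, c₂ * ‖u‖ ^ 2 ≤ a₂ u u)
    (a : T →L[ℝ] T →L[ℝ] ℝ)
    (ha : ∀ u₁ u₂ v₁ v₂, a (m u₁ u₂) (m v₁ v₂) = a₁ u₁ v₁ * a₂ u₂ v₂) :
    (∀ w : T, c₁ * c₂ * ‖w‖ ^ 2 ≤ a w w) ∧
    (∀ F : T →L[ℝ] ℝ, ∃! C : T, ∀ V : T, a C V = F V) :=
  stmt_16_general H₁ H₂ T m hdense hinner a₁ a₂ c₁ c₂ hc₁ hc₂ hsym₁ hsym₂ hcoer₁ hcoer₂ a ha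
end
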